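/- arXiv:1501.07790 — 2 statements merged into one kernel-verified Lean document; each statement's English description precedes it below -/
import Mathlib

section
/- Let v ≥ 7 with v ≡ 1 (mod 6), let D be a binary q-Steiner triple system S_2[2,3,v], and let A in GL(v, F_2) be an automorphism of D with A² = 1 and A ≠ 1. Then there exists s with 1 ≤ s ≤ ⌊v/2⌋ such that 3 divides s and A is conjugate in GL(v, F_2) to the matrix A_{v,s}. -/
/-!
Let `φ` be the involution `x ↦ x A` and `F = ker (φ - 1)` its fixed space, of dimension `f`.
In characteristic `2`, `(φ - 1)² = φ² - 1 = 0`, so `W = range (φ - 1) ⊆ F`. Lifting a basis of `W`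
through `φ - 1` to vectors `x_m` and completing it inside `F` by vectors `w_j` gives a basis
`x_m, φ x_m, w_j`, in which `A` becomes `A_{v,s}` with `s = dim W = v - f`, and `s ≥ 1` as `A ≠ 1`.

For `3 ∣ s`: as `(φ - 1)² = 0`, every `φ`-invariant block meets `F` in dimension `2` or `3`. The
block through two distinct nonzero fixed vectors is invariant, and so is the block through `x` and
`φ x` for `x ∉ F`. Counting ordered pairs of distinct nonzero vectors of `F`, resp. vectors outside
`F`, block by block gives `(2^f - 1)(2^f - 2) = 42 a + 6 b` and `2^v - 2^f = 4 b`, where `a`, `b`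
count the invariant blocks inside `F`, resp. meeting it in a plane. Modulo `7` this forces
`2^f ≡ 2`, i.e. `f ≡ 1 ≡ v (mod 3)`.
-/

/-- The space `F_2^v` of binary row vectors of length `v`. -/
abbrev BinVec (v : ℕ) := Fin v → ZMod 2

/-- The image `U·A` of a subspace `U` of `F_2^v` under the linear map `x ↦ x·A`
given by the matrix `A`. -/
def subApply (v : ℕ) (A : Matrix (Fin v) (Fin v) (ZMod 2))
    (U : Submodule (ZMod 2) (BinVec v)) : Submodule (ZMod 2) (BinVec v) :=
  U.map (Matrix.vecMulLinear A)

/-- A binary `q`-Steiner triple system `S_2[2,3,v]`: a set of `3`-dimensional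
subspaces (blocks) of `F_2^v` such that every `2`-dimensional subspace is
contained in exactly one block. -/
def IsSteinerTriple (v : ℕ) (D : Set (Submodule (ZMod 2) (BinVec v))) : Prop :=
  (∀ B ∈ D, Module.finrank (ZMod 2) B = 3) ∧
  ∀ T : Submodule (ZMod 2) (BinVec v), Module.finrank (ZMod 2) T = 2 →
    ∃! B, B ∈ D ∧ T ≤ B

/-- The matrix `A` is an automorphism of `D`: `U ↦ U·A` maps `D` onto itself. -/
def IsAutM (v : ℕ) (A : Matrix (Fin v) (Fin v) (ZMod 2))
    (D : Set (Submodule (ZMod 2) (BinVec v))) : Prop :=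
  subApply v A '' D = D

lemma subApply_one (v : ℕ) (U : Submodule (ZMod 2) (BinVec v)) :
    subApply v 1 U = U := by
  have h : Matrix.vecMulLinear (1 : Matrix (Fin v) (Fin v) (ZMod 2)) = LinearMap.id := by
    refine LinearMap.ext fun x => ?_
    simp [Matrix.vecMulLinear_apply]
  simp [subApply, h]

lemma subApply_mul (v : ℕ) (A B : Matrix (Fin v) (Fin v) (ZMod 2))
    (U : Submodule (ZMod 2) (BinVec v)) :
    subApply v (A * B) U = subApply v B (subApply v A U) := by
  have h : Matrix.vecMulLinear (A * B) =
      (Matrix.vecMulLinear B).comp (Matrix.vecMulLinear A) := LinearMap.ext fun x => by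
    simp only [Matrix.vecMulLinear_apply, LinearMap.coe_comp, Function.comp_apply]
    exact (Matrix.vecMul_vecMul x A B).symm
  rw [subApply, h, Submodule.map_comp]
  rfl

lemma subApply_comp (v : ℕ) (A B : Matrix (Fin v) (Fin v) (ZMod 2)) :
    (subApply v B) ∘ (subApply v A) = subApply v (A * B) :=
  funext fun U => (subApply_mul v A B U).symm

/-- The automorphism group of `D`, as a subgroup of `GL(v, F_2)`. -/
def Aut (v : ℕ) (D : Set (Submodule (ZMod 2) (BinVec v))) :
    Subgroup (GL (Fin v) (ZMod 2)) where
  carrier := {A | IsAutM v A.val D}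
  one_mem' := by
    show subApply v (1 : GL (Fin v) (ZMod 2)).val '' D = D
    rw [show (1 : GL (Fin v) (ZMod 2)).val = 1 from rfl]
    rw [show subApply v (1 : Matrix (Fin v) (Fin v) (ZMod 2)) = id from
      funext (subApply_one v), Set.image_id]
  mul_mem' := by
    intro A B hA hB
    show subApply v (A * B : GL (Fin v) (ZMod 2)).val '' D = D
    rw [show (A * B : GL (Fin v) (ZMod 2)).val = A.val * B.val from rfl]
    rw [← subApply_comp, Set.image_comp]
    rw [show subApply v A.val '' D = D from hA]
    exact hB
  inv_mem' := by
    intro A hA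
    show subApply v (A⁻¹ : GL (Fin v) (ZMod 2)).val '' D = D
    conv_lhs => rw [← show subApply v A.val '' D = D from hA]
    rw [← Set.image_comp, subApply_comp]
    rw [show A.val * (A⁻¹ : GL (Fin v) (ZMod 2)).val = 1 from A.mul_inv]
    rw [show subApply v (1 : Matrix (Fin v) (Fin v) (ZMod 2)) = id from
      funext (subApply_one v), Set.image_id]

/-- `pairSwap s i` swaps `2m ↔ 2m+1` for `i < 2s` and fixes `i` otherwise. -/
def pairSwap (s i : ℕ) : ℕ :=
  if i < 2 * s then (if i % 2 = 0 then i + 1 else i - 1) else i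

/-- The block diagonal matrix `A_{v,s}`: `s` consecutive blocks `[[0,1],[1,0]]`
on the diagonal, followed by a `(v-2s)×(v-2s)` identity matrix. -/
def Avs (v s : ℕ) : Matrix (Fin v) (Fin v) (ZMod 2) :=
  Matrix.of fun i j => if (j : ℕ) = pairSwap s (i : ℕ) then 1 else 0

/-- `M` and `N` are conjugate in `GL(v, F_2)`. -/
def ConjGL (v : ℕ) (M N : Matrix (Fin v) (Fin v) (ZMod 2)) : Prop :=
  ∃ P : GL (Fin v) (ZMod 2), M = P.val * N * (P⁻¹).val

/-- The orbit of a subspace `P` under the subgroup generated by `A`. -/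
def orbitOf (v : ℕ) (A : GL (Fin v) (ZMod 2)) (P : Submodule (ZMod 2) (BinVec v)) :
    Set (Submodule (ZMod 2) (BinVec v)) :=
  {Q | ∃ g ∈ Subgroup.zpowers A, Q = subApply v (g : GL (Fin v) (ZMod 2)).val P}

/-- The block diagonal matrix consisting of the 3×3 upper-triangular Jordan block
(1s on diagonal and superdiagonal) followed by the 4×4 upper-triangular Jordan
block (1s on diagonal and superdiagonal). -/
def JordanJ3J4 : Matrix (Fin 7) (Fin 7) (ZMod 2) :=
  Matrix.of fun i j =>
    if j = i then 1 else if (j : ℕ) = (i : ℕ) + 1 ∧ (i : ℕ) ≠ 2 then 1 else 0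

/-- The block diagonal matrix consisting of `k` consecutive 2×2 blocks
`[[0,1],[1,1]]` on the diagonal, followed by a `(v-2k)×(v-2k)` identity matrix. -/
def Bvk (v k : ℕ) : Matrix (Fin v) (Fin v) (ZMod 2) :=
  Matrix.of fun i j =>
    if (i : ℕ) < 2 * k then
      (if (i : ℕ) % 2 = 0 then (if (j : ℕ) = (i : ℕ) + 1 then 1 else 0)
       else (if (j : ℕ) = (i : ℕ) - 1 ∨ (j : ℕ) = (i : ℕ) then 1 else 0))
    else if i = j then 1 else 0

open Module Submodule
open LinearMap (ker range mem_ker mem_range mem_range_self map_le_range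
  finrank_range_add_finrank_ker)
open scoped Finset

section Involution

variable {K V : Type*} [Field K] [AddCommGroup V] [Module K V]

theorem map_eq_self_of_le_ker_sub_one {φ : Module.End K V} {T : Submodule K V}
    (hT : T ≤ ker (φ - 1)) : T.map φ = T := by
  have hfix : ∀ x ∈ T, φ x = x := fun x hx => by simpa [sub_eq_zero] using mem_ker.mp (hT hx)
  ext y
  constructor
  · rintro ⟨x, hx, rfl⟩
    rwa [hfix x hx]
  · exact fun hy => ⟨y, hy, hfix y hy⟩

theorem range_sub_one_le_ker_sub_one [CharP K 2] {φ : Module.End K V} (hφ : φ * φ = 1) :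
    range (φ - 1) ≤ ker (φ - 1) := by
  rintro _ ⟨y, rfl⟩
  have hy : φ (φ y) = y := by rw [← Module.End.mul_apply, hφ, Module.End.one_apply]
  rw [mem_ker]
  calc (φ - 1) ((φ - 1) y) = (2 : K) • (y - φ y) := by
        simp only [LinearMap.sub_apply, Module.End.one_apply, map_sub, hy]; module
    _ = 0 := by rw [CharTwo.two_eq_zero, zero_smul]

theorem finrank_le_two_mul_finrank_inf_ker [FiniteDimensional K V] {ℓ : V →ₗ[K] V}
    (hℓ : range ℓ ≤ ker ℓ) {U : Submodule K V} (hU : U.map ℓ ≤ U) :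
    finrank K U ≤ 2 * finrank K ↥(U ⊓ ker ℓ) := by
  have hrange : U.map ℓ ≤ U ⊓ ker ℓ := le_inf hU (map_le_range.trans hℓ)
  have hker : finrank K (ker (ℓ.domRestrict U)) = finrank K ↥(U ⊓ ker ℓ) := by
    rw [LinearMap.ker_domRestrict, ← finrank_map_subtype_eq, map_comap_subtype]
  have hrank := finrank_range_add_finrank_ker (ℓ.domRestrict U)
  rw [LinearMap.range_domRestrict, hker] at hrank
  have := finrank_mono hrange
  omega

theorem exists_linearIndependent_sumElim_of_le [FiniteDimensional K V] {W F : Submodule K V}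
    (hWF : W ≤ F) :
    ∃ (t : ℕ) (u : Fin (finrank K W) → V) (w : Fin t → V), finrank K W + t = finrank K F ∧
      (∀ m, u m ∈ W) ∧ (∀ j, w j ∈ F) ∧ LinearIndependent K (Sum.elim u w) := by
  obtain ⟨C, hC⟩ := Submodule.exists_isCompl (W.comap F.subtype)
  let bW := finBasis K W
  let bC := finBasis K C
  refine ⟨finrank K C, fun m => bW m, fun j => (bC j : F), ?_, fun m => (bW m).2,
    fun j => (bC j : F).2, ?_⟩
  · rw [← (comapSubtypeEquivOfLe hWF).finrank_eq, finrank_add_eq_of_isCompl hC]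
  have hu : LinearIndependent K fun m => (bW m : V) :=
    bW.linearIndependent.map' W.subtype W.ker_subtype
  have hw : LinearIndependent K fun j => ((bC j : F) : V) :=
    (bC.linearIndependent.map' C.subtype C.ker_subtype).map' F.subtype F.ker_subtype
  refine hu.sum_type hw ?_
  have hspanW : span K (Set.range fun m => (bW m : V)) = W := by
    rw [Set.range_comp', show (Subtype.val : W → V) = W.subtype from rfl, ← Submodule.map_span,
      bW.span_eq, Submodule.map_top, Submodule.range_subtype]
  have hspanC : span K (Set.range fun j => ((bC j : F) : V)) = C.map F.subtype := by
    rw [Set.range_comp', show (Subtype.val : F → V) = F.subtype from rfl, ← Submodule.map_span,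
      Set.range_comp', show (Subtype.val : C → F) = C.subtype from rfl, ← Submodule.map_span,
      bC.span_eq, Submodule.map_top, Submodule.range_subtype]
  rw [hspanW, hspanC, ← inf_eq_right.mpr hWF, ← map_comap_subtype]
  exact Submodule.disjoint_map F.injective_subtype hC.disjoint

theorem linearIndependent_sumElim_orbit {ι κ : Type*} [Fintype ι] [Fintype κ]
    {φ : Module.End K V} (hφ : range (φ - 1) ≤ ker (φ - 1)) {x : ι → V} {w : κ → V}
    (hw : ∀ j, w j ∈ ker (φ - 1))
    (hind : LinearIndependent K (Sum.elim (fun m => (φ - 1) (x m)) w)) :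
    LinearIndependent K (Sum.elim (fun p : ι × Fin 2 => ![x p.1, φ (x p.1)] p.2) w) := by
  rw [Fintype.linearIndependent_iff] at hind ⊢
  intro g hg
  simp only [Fintype.sum_sum_type, Fintype.sum_prod_type, Fin.sum_univ_two, Sum.elim_inl,
    Sum.elim_inr, Matrix.cons_val_zero, Matrix.cons_val_one] at hg
  have hφx (m : ι) : φ (x m) = x m + (φ - 1) (x m) := by simp
  have hφx' (m : ι) : (φ - 1) (φ (x m)) = (φ - 1) (x m) := by
    rw [hφx, map_add, mem_ker.mp (hφ (mem_range_self _ _)), add_zero]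
  have hw' (j : κ) : (φ - 1) (w j) = 0 := mem_ker.mp (hw j)
  -- applying `φ - 1` to the relation leaves `∑ (g (m, 0) + g (m, 1)) • (φ - 1) (x m) = 0`
  have hsum (m : ι) : g (.inl (m, 0)) + g (.inl (m, 1)) = 0 := by
    have h := congrArg (⇑(φ - 1)) hg
    simp only [map_add, map_sum, map_smul, hφx', hw', smul_zero, Finset.sum_const_zero,
      add_zero, map_zero, ← add_smul] at h
    simpa using hind (Sum.elim (fun m => g (.inl (m, 0)) + g (.inl (m, 1))) 0)
      (by simpa [Fintype.sum_sum_type] using h) (.inl m)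
  have hsnd := hind (Sum.elim (fun m => g (.inl (m, 1))) (fun j => g (.inr j))) (by
    rw [Fintype.sum_sum_type, ← hg]
    simp only [Sum.elim_inl, Sum.elim_inr]
    congr 1
    refine Finset.sum_congr rfl fun m _ => ?_
    rw [hφx, smul_add, ← add_assoc, ← add_smul, hsum, zero_smul, zero_add])
  rintro (⟨m, k⟩ | j)
  · have h1 : g (.inl (m, 1)) = 0 := hsnd (.inl m)
    fin_cases k
    · simpa [h1] using hsum m
    · exact h1
  · exact hsnd (.inr j)

theorem exists_linearIndependent_orbit [FiniteDimensional K V] [CharP K 2] {φ : Module.End K V}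
    (hφ : φ * φ = 1) :
    ∃ (t : ℕ) (c : (Fin (finrank K (range (φ - 1))) × Fin 2) ⊕ Fin t → V),
      finrank K (range (φ - 1)) * 2 + t = finrank K V ∧ LinearIndependent K c ∧
      ∀ i, φ (c i) = c (Sum.map (Prod.map id Fin.rev) id i) := by
  have hWF := range_sub_one_le_ker_sub_one hφ
  obtain ⟨t, u, w, hcard, hu, hw, hind⟩ := exists_linearIndependent_sumElim_of_le hWF
  choose x hx using fun m => mem_range.mp (hu m)
  refine ⟨t, _, ?_, linearIndependent_sumElim_orbit hWF hw (x := x) ?_, ?_⟩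
  · have := finrank_range_add_finrank_ker (φ - 1)
    omega
  · convert hind
    exact hx _
  have hφφ (y : V) : φ (φ y) = y := by rw [← Module.End.mul_apply, hφ, Module.End.one_apply]
  rintro (⟨m, k⟩ | j)
  · fin_cases k <;> simp [hφφ]
  · simpa [sub_eq_zero] using mem_ker.mp (hw j)

end Involution

section NormalForm

theorem vecMulLinear_mul_self_eq_one {n R : Type*} [Fintype n] [DecidableEq n] [CommRing R]
    {A : Matrix n n R} (hA : A * A = 1) : A.vecMulLinear * A.vecMulLinear = 1 :=
  LinearMap.ext fun x => by simp [Matrix.vecMul_vecMul, hA]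

theorem eq_one_of_finrank_range_vecMulLinear_sub_one {n K : Type*} [Fintype n] [DecidableEq n]
    [Field K] {A : Matrix n n K} (h : finrank K (range (A.vecMulLinear - 1)) = 0) : A = 1 := by
  rw [Submodule.finrank_eq_zero, LinearMap.range_eq_bot, sub_eq_zero] at h
  refine Matrix.ext_iff_vecMul.mpr fun x => ?_
  simpa using LinearMap.congr_fun h x

theorem conjGL_of_mul_eq {v : ℕ} {A M P : Matrix (Fin v) (Fin v) (ZMod 2)} (hP : IsUnit P)
    (h : P * A = M * P) : ConjGL v A M := by
  refine ⟨hP.unit⁻¹, ?_⟩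
  rw [inv_inv, IsUnit.unit_spec, mul_assoc, ← h, ← mul_assoc, Units.inv_mul_of_eq hP.unit_spec,
    one_mul]

theorem pairSwap_lt {v s i : ℕ} (hi : i < v) (hs : 2 * s ≤ v) : pairSwap s i < v := by
  unfold pairSwap
  split_ifs <;> omega

theorem Avs_mul_apply {v s : ℕ} (hs : 2 * s ≤ v) (P : Matrix (Fin v) (Fin v) (ZMod 2))
    (i : Fin v) : (Avs v s * P) i = P ⟨pairSwap s i, pairSwap_lt i.2 hs⟩ := by
  ext j
  rw [Matrix.mul_apply, Finset.sum_eq_single ⟨pairSwap s i, pairSwap_lt i.2 hs⟩]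
  · simp [Avs]
  · intro k _ hk
    simp [Avs, Fin.val_ne_iff.mpr hk]
  · simp

/-- The positions `2m, 2m+1` of `Fin v` carry `(m, 0), (m, 1)`, the last `t` positions `Fin t`. -/
def pairIndexEquiv {s t v : ℕ} (h : s * 2 + t = v) : (Fin s × Fin 2) ⊕ Fin t ≃ Fin v :=
  (Equiv.sumCongr finProdFinEquiv (Equiv.refl _)).trans (finSumFinEquiv.trans (finCongr h))

theorem pairSwap_pairIndexEquiv {s t v : ℕ} (h : s * 2 + t = v) (i : (Fin s × Fin 2) ⊕ Fin t) :
    pairSwap s (pairIndexEquiv h i) = pairIndexEquiv h (Sum.map (Prod.map id Fin.rev) id i) := by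
  rcases i with ⟨m, k⟩ | j
  · fin_cases k <;> simp [pairIndexEquiv, pairSwap] <;> omega
  · simp [pairIndexEquiv, pairSwap]
    omega

theorem conjGL_Avs_of_mul_self_eq_one {v : ℕ} {A : Matrix (Fin v) (Fin v) (ZMod 2)}
    (hA : A * A = 1) :
    2 * finrank (ZMod 2) (range (A.vecMulLinear - 1)) ≤ v ∧
      ConjGL v A (Avs v (finrank (ZMod 2) (range (A.vecMulLinear - 1)))) := by
  set φ : Module.End (ZMod 2) (BinVec v) := A.vecMulLinear
  set s := finrank (ZMod 2) (range (φ - 1))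
  obtain ⟨t, c, hcard, hind, hswap⟩ :=
    exists_linearIndependent_orbit (φ := φ) (vecMulLinear_mul_self_eq_one hA)
  rw [finrank_fin_fun] at hcard
  have hs : 2 * s ≤ v := by omega
  let e := pairIndexEquiv hcard
  let P : Matrix (Fin v) (Fin v) (ZMod 2) := Matrix.of fun i => c (e.symm i)
  have hP : IsUnit P :=
    Matrix.linearIndependent_rows_iff_isUnit.mp (hind.comp _ e.symm.injective)
  refine ⟨hs, conjGL_of_mul_eq hP ?_⟩
  ext1 i
  have he : e.symm ⟨pairSwap s i, pairSwap_lt i.2 hs⟩ =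
      Sum.map (Prod.map id Fin.rev) id (e.symm i) := by
    rw [Equiv.symm_apply_eq]
    exact Fin.ext (by rw [← pairSwap_pairIndexEquiv, Equiv.apply_symm_apply])
  rw [Avs_mul_apply hs]
  simp only [P, Matrix.of_apply, he, ← hswap]
  intro j
  simp [Matrix.mul_apply, φ, Matrix.vecMul, dotProduct]

end NormalForm

section F2

variable {V : Type*} [AddCommGroup V] [Module (ZMod 2) V]

theorem finrank_span_pair_eq_two {x y : V} (hx : x ≠ 0) (hy : y ≠ 0) (hxy : x ≠ y) :
    finrank (ZMod 2) (span (ZMod 2) {x, y}) = 2 := by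
  have hind : LinearIndependent (ZMod 2) ![x, y] := by
    rw [LinearIndependent.pair_iff' hx]
    intro a
    obtain rfl | rfl : a = 0 ∨ a = 1 := by revert a; decide
    · simpa using hy.symm
    · simpa using hxy
  have h := finrank_span_eq_card hind
  rwa [Matrix.range_cons_cons_empty, Fintype.card_fin] at h

variable [Fintype V]

open Classical in
noncomputable def diffFinset (U F : Submodule (ZMod 2) V) : Finset V :=
  {x | x ∈ U ∧ x ∉ F}

noncomputable def nonzeroPairs (U : Submodule (ZMod 2) V) : Finset (V × V) :=
  (diffFinset U ⊥).offDiag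

theorem mem_diffFinset {U F : Submodule (ZMod 2) V} {x : V} :
    x ∈ diffFinset U F ↔ x ∈ U ∧ x ∉ F := by
  simp [diffFinset]

theorem mem_nonzeroPairs {U : Submodule (ZMod 2) V} {p : V × V} :
    p ∈ nonzeroPairs U ↔ p.1 ∈ U ∧ p.2 ∈ U ∧ p.1 ≠ 0 ∧ p.2 ≠ 0 ∧ p.1 ≠ p.2 := by
  simp [nonzeroPairs, mem_diffFinset]
  tauto

theorem card_filter_mem (U : Submodule (ZMod 2) V) [DecidablePred (· ∈ U)] :
    #{x | x ∈ U} = 2 ^ finrank (ZMod 2) U := by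
  rw [← Fintype.card_subtype, ← Nat.card_eq_fintype_card, natCard_eq_pow_finrank (K := ZMod 2),
    Nat.card_zmod]

theorem card_diffFinset_add (U F : Submodule (ZMod 2) V) :
    #(diffFinset U F) + 2 ^ finrank (ZMod 2) ↥(U ⊓ F) = 2 ^ finrank (ZMod 2) U := by
  classical
  rw [← card_filter_mem, ← card_filter_mem, add_comm,
    ← Finset.card_filter_add_card_filter_not (s := {x | x ∈ U}) (· ∈ F)]
  simp only [Finset.filter_filter, mem_inf, diffFinset]

theorem cast_card_nonzeroPairs {R : Type*} [CommRing R] (U : Submodule (ZMod 2) V) :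
    (#(nonzeroPairs U) : R) = (2 ^ finrank (ZMod 2) U - 1) * (2 ^ finrank (ZMod 2) U - 2) := by
  have h := card_diffFinset_add U ⊥
  rw [inf_bot_eq, finrank_bot, pow_zero] at h
  have h' : (#(diffFinset U ⊥) : R) = 2 ^ finrank (ZMod 2) U - 1 := by
    rw [eq_sub_iff_add_eq]
    simpa using congrArg (Nat.cast : ℕ → R) h
  rw [nonzeroPairs, Finset.offDiag_card, Nat.cast_sub (Nat.le_mul_self _), Nat.cast_mul, h']
  ring

end F2

section Blocks

variable {v : ℕ} {D : Set (Submodule (ZMod 2) (BinVec v))}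
  {T B : Submodule (ZMod 2) (BinVec v)} {φ : Module.End (ZMod 2) (BinVec v)}

noncomputable def invariantBlocks (D : Set (Submodule (ZMod 2) (BinVec v)))
    (φ : Module.End (ZMod 2) (BinVec v)) : Finset (Submodule (ZMod 2) (BinVec v)) :=
  (Set.toFinite {B | B ∈ D ∧ B.map φ = B}).toFinset

theorem mem_invariantBlocks : B ∈ invariantBlocks D φ ↔ B ∈ D ∧ B.map φ = B :=
  Set.Finite.mem_toFinset _

namespace IsSteinerTriple

section

variable (hD : IsSteinerTriple v D)

noncomputable def block (T : Submodule (ZMod 2) (BinVec v)) : Submodule (ZMod 2) (BinVec v) :=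
  if hT : finrank (ZMod 2) T = 2 then (hD.2 T hT).exists.choose else ⊥

theorem block_spec (hT : finrank (ZMod 2) T = 2) : hD.block T ∈ D ∧ T ≤ hD.block T := by
  rw [block, dif_pos hT]
  exact (hD.2 T hT).exists.choose_spec

theorem block_eq_iff (hT : finrank (ZMod 2) T = 2) (hB : B ∈ D) : hD.block T = B ↔ T ≤ B :=
  ⟨fun h => h ▸ (hD.block_spec hT).2, fun h => (hD.2 T hT).unique (hD.block_spec hT) ⟨hB, h⟩⟩

theorem block_span_pair_eq_iff {x y : BinVec v} (hx : x ≠ 0) (hy : y ≠ 0) (hxy : x ≠ y)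
    (hB : B ∈ D) : hD.block (span (ZMod 2) {x, y}) = B ↔ x ∈ B ∧ y ∈ B := by
  rw [hD.block_eq_iff (finrank_span_pair_eq_two hx hy hxy) hB, span_le, Set.insert_subset_iff,
    Set.singleton_subset_iff, SetLike.mem_coe, SetLike.mem_coe]

theorem map_block (hDφ : ∀ B ∈ D, B.map φ ∈ D) (hT : finrank (ZMod 2) T = 2)
    (hTφ : T.map φ = T) : (hD.block T).map φ = hD.block T := by
  refine ((hD.block_eq_iff hT (hDφ _ (hD.block_spec hT).1)).mpr ?_).symm
  exact hTφ.symm.le.trans (map_mono (hD.block_spec hT).2)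

end

theorem two_le_finrank_inf_ker (hD : IsSteinerTriple v D) (hφ : φ * φ = 1) (hB : B ∈ D)
    (hBφ : B.map φ = B) : 2 ≤ finrank (ZMod 2) ↥(B ⊓ ker (φ - 1)) := by
  have hB1 : B.map (φ - 1) ≤ B := by
    rintro _ ⟨x, hx, rfl⟩
    exact sub_mem (hBφ ▸ mem_map_of_mem hx) hx
  have := finrank_le_two_mul_finrank_inf_ker (range_sub_one_le_ker_sub_one hφ) hB1
  rw [hD.1 B hB] at this
  omega

/-- A block meeting the fixed space in a plane holds `6` pairs of nonzero fixed vectors and `4`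
vectors that are not fixed, a block inside the fixed space `42` such pairs and none: `6 ≡ 5 · 4`
and `42 ≡ 5 · 0 (mod 7)`. -/
theorem cast_card_nonzeroPairs_inf_ker (hD : IsSteinerTriple v D) (hφ : φ * φ = 1) (hB : B ∈ D)
    (hBφ : B.map φ = B) :
    (#(nonzeroPairs (B ⊓ ker (φ - 1))) : ZMod 7) = 5 * #(diffFinset B (ker (φ - 1))) := by
  have hsplit := card_diffFinset_add B (ker (φ - 1))
  have hlow := hD.two_le_finrank_inf_ker hφ hB hBφ
  have hup : finrank (ZMod 2) ↥(B ⊓ ker (φ - 1)) ≤ 3 := hD.1 B hB ▸ finrank_mono inf_le_left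
  rw [hD.1 B hB] at hsplit
  rw [cast_card_nonzeroPairs]
  interval_cases finrank (ZMod 2) ↥(B ⊓ ker (φ - 1))
  · rw [show #(diffFinset B (ker (φ - 1))) = 4 by omega]; decide
  · rw [show #(diffFinset B (ker (φ - 1))) = 0 by omega]; decide

theorem card_nonzeroPairs_ker_eq_sum (hD : IsSteinerTriple v D)
    (hDφ : ∀ B ∈ D, B.map φ ∈ D) :
    #(nonzeroPairs (ker (φ - 1))) =
      ∑ B ∈ invariantBlocks D φ, #(nonzeroPairs (B ⊓ ker (φ - 1))) := by
  classical
  rw [Finset.card_eq_sum_card_fiberwise (f := fun p => hD.block (span (ZMod 2) {p.1, p.2}))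
    (t := invariantBlocks D φ)]
  · refine Finset.sum_congr rfl fun B hB => congrArg Finset.card (Finset.ext fun p => ?_)
    have hBD := (mem_invariantBlocks.mp hB).1
    simp only [Finset.mem_filter, mem_nonzeroPairs, mem_inf]
    constructor
    · rintro ⟨⟨h1F, h2F, h1, h2, h12⟩, hblock⟩
      obtain ⟨h1B, h2B⟩ := (hD.block_span_pair_eq_iff h1 h2 h12 hBD).mp hblock
      exact ⟨⟨h1B, h1F⟩, ⟨h2B, h2F⟩, h1, h2, h12⟩
    · rintro ⟨⟨h1B, h1F⟩, ⟨h2B, h2F⟩, h1, h2, h12⟩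
      exact ⟨⟨h1F, h2F, h1, h2, h12⟩,
        (hD.block_span_pair_eq_iff h1 h2 h12 hBD).mpr ⟨h1B, h2B⟩⟩
  · intro p hp
    obtain ⟨h1F, h2F, h1, h2, h12⟩ := mem_nonzeroPairs.mp hp
    have hT := finrank_span_pair_eq_two h1 h2 h12
    have hTF : span (ZMod 2) {p.1, p.2} ≤ ker (φ - 1) := by
      rw [span_le, Set.insert_subset_iff, Set.singleton_subset_iff]
      exact ⟨h1F, h2F⟩
    exact mem_invariantBlocks.mpr
      ⟨(hD.block_spec hT).1, hD.map_block hDφ hT (map_eq_self_of_le_ker_sub_one hTF)⟩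

theorem card_diffFinset_ker_eq_sum (hD : IsSteinerTriple v D) (hφ : φ * φ = 1)
    (hDφ : ∀ B ∈ D, B.map φ ∈ D) :
    #(diffFinset ⊤ (ker (φ - 1))) =
      ∑ B ∈ invariantBlocks D φ, #(diffFinset B (ker (φ - 1))) := by
  classical
  have hφφ (x : BinVec v) : φ (φ x) = x := by
    rw [← Module.End.mul_apply, hφ, Module.End.one_apply]
  have hpair {x : BinVec v} (hx : x ∉ ker (φ - 1)) : x ≠ 0 ∧ φ x ≠ 0 ∧ x ≠ φ x := by
    simp only [mem_ker, LinearMap.sub_apply, Module.End.one_apply, sub_eq_zero] at hx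
    exact ⟨fun h => hx (by simp [h]), fun h => hx (by rw [h, ← hφφ x, h, map_zero]),
      fun h => hx h.symm⟩
  rw [Finset.card_eq_sum_card_fiberwise (f := fun x => hD.block (span (ZMod 2) {x, φ x}))
    (t := invariantBlocks D φ)]
  · refine Finset.sum_congr rfl fun B hB => congrArg Finset.card (Finset.ext fun x => ?_)
    obtain ⟨hBD, hBφ⟩ := mem_invariantBlocks.mp hB
    simp only [Finset.mem_filter, mem_diffFinset, mem_top, true_and]
    constructor
    · rintro ⟨hxF, hblock⟩
      obtain ⟨h1, h2, h12⟩ := hpair hxF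
      exact ⟨((hD.block_span_pair_eq_iff h1 h2 h12 hBD).mp hblock).1, hxF⟩
    · rintro ⟨hxB, hxF⟩
      obtain ⟨h1, h2, h12⟩ := hpair hxF
      exact ⟨hxF, (hD.block_span_pair_eq_iff h1 h2 h12 hBD).mpr
        ⟨hxB, hBφ ▸ mem_map_of_mem hxB⟩⟩
  · intro x hx
    obtain ⟨h1, h2, h12⟩ := hpair (mem_diffFinset.mp hx).2
    have hT := finrank_span_pair_eq_two h1 h2 h12
    have hTφ : (span (ZMod 2) {x, φ x}).map φ = span (ZMod 2) {x, φ x} := by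
      rw [map_span, Set.image_pair, hφφ, Set.pair_comm]
    exact mem_invariantBlocks.mpr ⟨(hD.block_spec hT).1, hD.map_block hDφ hT hTφ⟩

theorem two_pow_finrank_ker_zmod_seven (hD : IsSteinerTriple v D) (hφ : φ * φ = 1)
    (hDφ : ∀ B ∈ D, B.map φ ∈ D) :
    ((2 : ZMod 7) ^ finrank (ZMod 2) (ker (φ - 1)) - 1) *
        (2 ^ finrank (ZMod 2) (ker (φ - 1)) - 2) =
      5 * (2 ^ v - 2 ^ finrank (ZMod 2) (ker (φ - 1))) := by
  have hout := congrArg (Nat.cast : ℕ → ZMod 7) (card_diffFinset_add ⊤ (ker (φ - 1)))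
  rw [top_inf_eq, finrank_top, finrank_fin_fun] at hout
  push_cast at hout
  calc _ = (#(nonzeroPairs (ker (φ - 1))) : ZMod 7) := (cast_card_nonzeroPairs _).symm
    _ = ∑ B ∈ invariantBlocks D φ, 5 * (#(diffFinset B (ker (φ - 1))) : ZMod 7) := by
      rw [hD.card_nonzeroPairs_ker_eq_sum hDφ, Nat.cast_sum]
      refine Finset.sum_congr rfl fun B hB => ?_
      obtain ⟨hBD, hBφ⟩ := mem_invariantBlocks.mp hB
      exact hD.cast_card_nonzeroPairs_inf_ker hφ hBD hBφ
    _ = 5 * (#(diffFinset ⊤ (ker (φ - 1))) : ZMod 7) := by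
      rw [← Finset.mul_sum, hD.card_diffFinset_ker_eq_sum hφ hDφ, Nat.cast_sum]
    _ = _ := by rw [eq_sub_of_add_eq hout]

end IsSteinerTriple

end Blocks

theorem mod_three_eq_one_of_zmod_seven {f v : ℕ} (hv : v % 3 = 1)
    (h : ((2 : ZMod 7) ^ f - 1) * (2 ^ f - 2) = 5 * (2 ^ v - 2 ^ f)) : f % 3 = 1 := by
  have hpow (n : ℕ) : (2 : ZMod 7) ^ n = 2 ^ (n % 3) := by
    conv_lhs => rw [← Nat.mod_add_div n 3, pow_add, pow_mul]
    rw [show (2 : ZMod 7) ^ 3 = 1 by decide, one_pow, mul_one]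
  rw [hpow f, hpow v, hv] at h
  have hf : f % 3 < 3 := Nat.mod_lt f (by norm_num)
  interval_cases f % 3
  · exact absurd h (by decide)
  · rfl
  · exact absurd h (by decide)

theorem stmt1_general (v : ℕ) (hv : v % 6 = 1)
    (D : Set (Submodule (ZMod 2) (BinVec v))) (hD : IsSteinerTriple v D)
    (A : GL (Fin v) (ZMod 2)) (hAut : IsAutM v A.val D)
    (hA2 : A ^ 2 = 1) (hA1 : A ≠ 1) :
    ∃ s : ℕ, 1 ≤ s ∧ s ≤ v / 2 ∧ 3 ∣ s ∧ ConjGL v A.val (Avs v s) := by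
  have hA : A.val * A.val = 1 := by rw [← Units.val_mul, ← sq, hA2, Units.val_one]
  have hDφ : ∀ B ∈ D, B.map A.val.vecMulLinear ∈ D := fun B hB =>
    hAut ▸ Set.mem_image_of_mem _ hB
  obtain ⟨hs, hconj⟩ := conjGL_Avs_of_mul_self_eq_one hA
  have hs0 : finrank (ZMod 2) (range (A.val.vecMulLinear - 1)) ≠ 0 := fun h =>
    hA1 (Units.ext (eq_one_of_finrank_range_vecMulLinear_sub_one h))
  have hf : finrank (ZMod 2) (ker (A.val.vecMulLinear - 1)) % 3 = 1 :=
    mod_three_eq_one_of_zmod_seven (by omega)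
      (hD.two_pow_finrank_ker_zmod_seven (vecMulLinear_mul_self_eq_one hA) hDφ)
  have hrank := finrank_range_add_finrank_ker (A.val.vecMulLinear - 1)
  rw [finrank_fin_fun] at hrank
  exact ⟨_, Nat.one_le_iff_ne_zero.mpr hs0, by omega, by omega, hconj⟩

/-- automorphisms of order 2 of an `S_2[2,3,v]` with `v ≡ 1 (mod 6)`. -/
theorem stmt1 (v : ℕ) (hv7 : 7 ≤ v) (hv : v % 6 = 1)
    (D : Set (Submodule (ZMod 2) (BinVec v))) (hD : IsSteinerTriple v D)
    (A : GL (Fin v) (ZMod 2)) (hAut : IsAutM v A.val D)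
    (hA2 : A ^ 2 = 1) (hA1 : A ≠ 1) :
    ∃ s : ℕ, 1 ≤ s ∧ s ≤ v / 2 ∧ 3 ∣ s ∧ ConjGL v A.val (Avs v s) :=
  stmt1_general v hv D hD A hAut hA2 hA1
end

section
/- Let D be a binary q-analog of the Fano plane. Then there is no A in GL(7, F_2) of order 31 that is an automorphism of D. Equivalently, 31 does not divide the order of Aut(D). -/
/-! The cyclic group generated by an `A` of prime order `31` has orbits of size `1` or `31`, so on
every finite `A`-invariant set the number of fixed points is congruent to the size modulo `31`.
On `F_2^7` this gives `2^d ≡ 2^7` for the dimension `d` of the fixed space `F`, hence `d = 2`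
(`d = 7` would force `A = 1`). The unique block `B ⊇ F` is mapped to a block containing `A F = F`,
so `A B = B`; since `B` has only `8 < 31` vectors, `A` fixes `B` pointwise, i.e. `B ≤ F`, which
contradicts `dim B = 3`. Cauchy's theorem turns `31 ∣ |Aut D|` into an automorphism of order `31`.
-/

open Matrix Module

theorem Function.End.eq_one_of_pow_prime_eq_one_of_card_lt {α : Type*} [Fintype α] {p : ℕ}
    [Fact p.Prime] {f : Function.End α} (hf : f ^ p = 1) (hcard : Fintype.card α < p) :
    f = 1 := by
  classical
  have hmod := Equiv.Perm.card_fixedPoints_modEq (f := f) (n := 1) (by rwa [pow_one])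
  have hfix : Fintype.card α = Fintype.card f.fixedPoints :=
    hmod.eq_of_lt_of_lt hcard (Fintype.card_subtype_le _ |>.trans_lt hcard)
  funext x
  by_contra hx
  exact hfix.not_gt (Fintype.card_subtype_lt (p := (· ∈ f.fixedPoints)) hx)

namespace Module.End

variable {R M : Type*} [CommRing R] [AddCommGroup M] [Module R M]

theorem coe_eigenspace_one (f : End R M) :
    (f.eigenspace 1 : Set M) = Function.fixedPoints f := by
  ext x
  simp [Function.IsFixedPt]

theorem map_eigenspace_one (f : End R M) : (f.eigenspace 1).map f = f.eigenspace 1 := by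
  have hfix (x) (hx : x ∈ f.eigenspace 1) : f x = x := by simpa using mem_eigenspace_iff.mp hx
  refine le_antisymm (Submodule.map_le_iff_le_comap.mpr fun x hx => ?_) fun x hx => ?_
  · simp [hfix x hx, hx]
  · exact ⟨x, hx, hfix x hx⟩

theorem card_modEq_card_eigenspace_one [Finite M] {p n : ℕ} [Fact p.Prime] {f : End R M}
    (hf : f ^ p ^ n = 1) : Nat.card M ≡ Nat.card (f.eigenspace 1) [MOD p] := by
  classical
  have : Fintype M := Fintype.ofFinite M
  have hcard : Nat.card (f.eigenspace 1) = Nat.card (Function.fixedPoints f) := by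
    rw [← coe_eigenspace_one]
    rfl
  rw [hcard, Nat.card_eq_fintype_card, Nat.card_eq_fintype_card]
  refine Equiv.Perm.card_fixedPoints_modEq (f := ⇑f) (n := n) ?_
  change (⇑f)^[p ^ n] = id
  rw [← coe_pow, hf, one_eq_id, LinearMap.id_coe]

theorem le_eigenspace_one_of_pow_prime_eq_one {p : ℕ} [Fact p.Prime] {f : End R M}
    (hf : f ^ p = 1) {W : Submodule R M} [Finite W] (hW : ∀ x ∈ W, f x ∈ W)
    (hcard : Nat.card W < p) : W ≤ f.eigenspace 1 := by
  have : Fintype W := Fintype.ofFinite W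
  let g : Function.End W := ⇑(f.restrict hW)
  have hres : g ^ p = 1 := by
    change (⇑(f.restrict hW))^[p] = id
    rw [← coe_pow, pow_restrict]
    ext x
    simp [hf]
  have hid := Function.End.eq_one_of_pow_prime_eq_one_of_card_lt hres
    (by rwa [← Nat.card_eq_fintype_card])
  intro x hx
  rw [mem_eigenspace_iff, one_smul]
  exact congrArg Subtype.val (congrFun hid ⟨x, hx⟩)

end Module.End

theorem Matrix.vecMulLinear_pow {n R : Type*} [Fintype n] [DecidableEq n] [CommSemiring R]
    (M : Matrix n n R) (k : ℕ) : vecMulLinear (M ^ k) = vecMulLinear M ^ k := by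
  induction k with
  | zero => ext; simp
  | succ k ih =>
    refine LinearMap.ext fun x => ?_
    rw [pow_succ, pow_succ', Module.End.mul_apply, ← ih]
    simp [vecMul_vecMul]

theorem Matrix.GeneralLinearGroup.vecMulLinear_pow_orderOf {n R : Type*} [Fintype n]
    [DecidableEq n] [CommRing R] (A : GL n R) : vecMulLinear A.val ^ orderOf A = 1 := by
  rw [← vecMulLinear_pow, ← Units.val_pow_eq_pow_val, pow_orderOf_eq_one, Units.val_one]
  simpa using vecMulLinear_pow (1 : Matrix n n R) 0

theorem finrank_eigenspace_one_of_orderOf_eq_31 {A : GL (Fin 7) (ZMod 2)} (hA : orderOf A = 31) :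
    finrank (ZMod 2) (Module.End.eigenspace (vecMulLinear A.val) 1) = 2 := by
  have : Fact (Nat.Prime 31) := ⟨by norm_num⟩
  set F := Module.End.eigenspace (vecMulLinear A.val) 1
  have hmod : 2 ^ 7 ≡ 2 ^ finrank (ZMod 2) F [MOD 31] := by
    have h := Module.End.card_modEq_card_eigenspace_one (p := 31) (n := 1)
      (f := vecMulLinear A.val)
      (by rw [pow_one, ← hA, GeneralLinearGroup.vecMulLinear_pow_orderOf])
    rwa [natCard_eq_pow_finrank (K := ZMod 2) (V := Fin 7 → ZMod 2),
      natCard_eq_pow_finrank (K := ZMod 2) (V := F), Nat.card_zmod,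
      finrank_fin_fun] at h
  have hle : finrank (ZMod 2) F ≤ 7 := (Submodule.finrank_le F).trans_eq (finrank_fin_fun _)
  have key : ∀ d ≤ 7, 2 ^ 7 ≡ 2 ^ d [MOD 31] → d = 2 ∨ d = 7 := by decide
  refine (key _ hle hmod).resolve_right fun h7 => ?_
  have hFtop : F = ⊤ := Submodule.eq_top_of_finrank_eq (h7.trans (finrank_fin_fun _).symm)
  have hA1 : A = 1 := Units.ext <| ext_iff_vecMul.mpr fun x => by
    simpa using Module.End.mem_eigenspace_iff.mp (hFtop ▸ Submodule.mem_top : x ∈ F)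
  simp [hA1] at hA

theorem IsSteinerTriple.subApply_eq_self_of_le {v : ℕ} {D : Set (Submodule (ZMod 2) (BinVec v))}
    (hD : IsSteinerTriple v D) {M : Matrix (Fin v) (Fin v) (ZMod 2)} (hM : IsAutM v M D)
    {T B : Submodule (ZMod 2) (BinVec v)} (hT : finrank (ZMod 2) T = 2)
    (hMT : subApply v M T = T) (hB : B ∈ D) (hTB : T ≤ B) : subApply v M B = B :=
  (hD.2 T hT).unique ⟨hM ▸ Set.mem_image_of_mem _ hB, hMT ▸ Submodule.map_mono hTB⟩
    ⟨hB, hTB⟩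

theorem IsSteinerTriple.not_isAutM_of_orderOf_eq_31 {D : Set (Submodule (ZMod 2) (BinVec 7))}
    (hD : IsSteinerTriple 7 D) {A : GL (Fin 7) (ZMod 2)} (hA : orderOf A = 31) :
    ¬ IsAutM 7 A.val D := by
  intro hAut
  have : Fact (Nat.Prime 31) := ⟨by norm_num⟩
  set f := vecMulLinear A.val
  have hF := finrank_eigenspace_one_of_orderOf_eq_31 hA
  obtain ⟨B, ⟨hBD, hFB⟩, -⟩ := hD.2 _ hF
  have hBinv : B.map f = B :=
    hD.subApply_eq_self_of_le hAut hF (Module.End.map_eigenspace_one f) hBD hFB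
  have hBF : B ≤ Module.End.eigenspace f 1 := by
    refine Module.End.le_eigenspace_one_of_pow_prime_eq_one
      (hA ▸ GeneralLinearGroup.vecMulLinear_pow_orderOf A)
      (fun x hx => hBinv ▸ Submodule.mem_map_of_mem hx) ?_
    rw [natCard_eq_pow_finrank (K := ZMod 2), Nat.card_zmod, hD.1 B hBD]
    norm_num
  have hdim := Submodule.finrank_mono hBF
  rw [hF, hD.1 B hBD] at hdim
  omega

/-- No automorphism of order 31; equivalently `31 ∤ #Aut(D)`. -/
theorem stmt_elt (D : Set (Submodule (ZMod 2) (BinVec 7))) (hD : IsSteinerTriple 7 D) :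
    (¬ ∃ A : GL (Fin 7) (ZMod 2), orderOf A = 31 ∧ IsAutM 7 A.val D) ∧
    ¬ (31 ∣ Nat.card (Aut 7 D)) := by
  have : Fact (Nat.Prime 31) := ⟨by norm_num⟩
  refine ⟨fun ⟨A, hA, hAut⟩ => hD.not_isAutM_of_orderOf_eq_31 hA hAut, fun hdvd => ?_⟩
  obtain ⟨A, hA⟩ := exists_prime_orderOf_dvd_card' 31 hdvd
  exact hD.not_isAutM_of_orderOf_eq_31 (by rwa [Subgroup.orderOf_coe]) A.2
end
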